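/- arXiv:2603.18416 — 2 statements merged into one kernel-verified Lean document; each statement's English description precedes it below -/
import Mathlib

section
/- Suppose a one-form ρ and constants m, q, and the vectorial-nonmetricity data (c₁, c₂, c₃, b) satisfy, for all vectors ẋ: c₂ B ẋ_μ + (1/2)(c₃B² + c₁A) b_μ = ρ_μ(mA + qB²), where A is a nondegenerate quadratic and B = b_μẋ^μ with b ≠ 0. Then necessarily c₂ = 0, q ρ_μ = (c₃/2) b_μ, m ρ_μ = (c₁/2) b_μ, and c₃ m = c₁ q. -/
/-!
Polarizing the identity turns it into a bilinear identity in a pair of vectors `(x, y)`.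
A totally isotropic subspace of a nondegenerate form has dimension at most `n / 2`, so for
`n ≥ 3` the hyperplane `b⊥` is not totally isotropic for `a`: there are `x, y ⊥ b` with
`xᵀ a y ≠ 0`, and evaluating at such a pair gives `m ρ = (c₁/2) b`. Evaluating at `(b, y)`
then forces `c₂ = 0`, evaluating at `(b, b)` gives `q ρ = (c₃/2) b`, and `c₃ m = c₁ q` follows
by comparing these two at a coordinate where `b ≠ 0`.
-/

open Module Matrix

namespace LinearMap.BilinForm

variable {K V : Type*} [Field K] [AddCommGroup V] [Module K V] [FiniteDimensional K V]
  {B : LinearMap.BilinForm K V}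

theorem Nondegenerate.two_mul_finrank_le_of_le_orthogonal (hB : B.Nondegenerate)
    {W : Submodule K V} (hW : W ≤ B.orthogonal W) : 2 * finrank K W ≤ finrank K V := by
  have hle := Submodule.finrank_mono hW
  rw [finrank_orthogonal hB] at hle
  omega

theorem Nondegenerate.exists_mem_ker_apply_ne_zero (hB : B.Nondegenerate) (ℓ : Dual K V)
    (hV : 3 ≤ finrank K V) : ∃ x ∈ ker ℓ, ∃ y ∈ ker ℓ, B x y ≠ 0 := by
  by_contra! h
  have hiso := hB.two_mul_finrank_le_of_le_orthogonal fun y hy =>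
    mem_orthogonal_iff.2 fun x hx => h x hx y hy
  have hrank := ℓ.finrank_range_add_finrank_ker
  have hrange : finrank K (range ℓ) ≤ 1 := (Submodule.finrank_le _).trans (finrank_self K).le
  omega

end LinearMap.BilinForm

namespace Matrix

variable {ι : Type*} [Fintype ι]

theorem sum_sum_mul_mul_eq_dotProduct_mulVec {R : Type*} [CommSemiring R] (a : Matrix ι ι R)
    (x y : ι → R) : ∑ i, ∑ j, a i j * x i * y j = x ⬝ᵥ a *ᵥ y := by
  simp only [dotProduct, mulVec, Finset.mul_sum]
  exact Finset.sum_congr rfl fun i _ => Finset.sum_congr rfl fun j _ => by ring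

theorem IsSymm.dotProduct_mulVec_comm {R : Type*} [CommSemiring R] {a : Matrix ι ι R}
    (ha : a.IsSymm) (x y : ι → R) : y ⬝ᵥ a *ᵥ x = x ⬝ᵥ a *ᵥ y := by
  rw [dotProduct_mulVec, ← mulVec_transpose, ha.eq, dotProduct_comm]

theorem exists_dotProduct_eq_zero_mulVec_ne_zero {K : Type*} [Field K] [DecidableEq ι]
    {a : Matrix ι ι K} (ha : a.det ≠ 0) (hι : 3 ≤ Fintype.card ι) (b : ι → K) :
    ∃ x y, b ⬝ᵥ x = 0 ∧ b ⬝ᵥ y = 0 ∧ x ⬝ᵥ a *ᵥ y ≠ 0 := by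
  obtain ⟨x, hx, y, hy, hxy⟩ :=
    (nondegenerate_of_det_ne_zero ha).toBilin'.exists_mem_ker_apply_ne_zero
      (dotProductBilin K K b) (by rwa [finrank_fintype_fun_eq_card])
  exact ⟨x, y, hx, hy, by rwa [toBilin'_apply'] at hxy⟩

end Matrix

section

variable {ι : Type*} [Fintype ι]

/-- The paper's identity at `ẋ = x`, component `μ`, with `A = x ⬝ᵥ a *ᵥ x` and `B = b ⬝ᵥ x`. -/
def MetrizabilityCondition (a : Matrix ι ι ℝ) (b ρ : ι → ℝ) (c₁ c₂ c₃ m q : ℝ) : Prop :=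
  ∀ x μ, c₂ * (b ⬝ᵥ x) * (a *ᵥ x) μ + 1 / 2 * (c₃ * (b ⬝ᵥ x) ^ 2 + c₁ * (x ⬝ᵥ a *ᵥ x)) * b μ
    = ρ μ * (m * (x ⬝ᵥ a *ᵥ x) + q * (b ⬝ᵥ x) ^ 2)

namespace MetrizabilityCondition

variable {a : Matrix ι ι ℝ} {b ρ : ι → ℝ} {c₁ c₂ c₃ m q : ℝ}

theorem polarized (h : MetrizabilityCondition a b ρ c₁ c₂ c₃ m q) (ha : a.IsSymm)
    (x y : ι → ℝ) (μ : ι) :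
    c₂ * ((b ⬝ᵥ x) * (a *ᵥ y) μ + (b ⬝ᵥ y) * (a *ᵥ x) μ)
        + (c₃ * (b ⬝ᵥ x) * (b ⬝ᵥ y) + c₁ * (x ⬝ᵥ a *ᵥ y)) * b μ
      = 2 * ρ μ * (m * (x ⬝ᵥ a *ᵥ y) + q * (b ⬝ᵥ x) * (b ⬝ᵥ y)) := by
  have hxy := h (x + y) μ
  simp only [dotProduct_add, add_dotProduct, mulVec_add, Pi.add_apply,
    ha.dotProduct_mulVec_comm x y] at hxy
  linear_combination hxy - h x μ - h y μ

theorem m_mul_eq (h : MetrizabilityCondition a b ρ c₁ c₂ c₃ m q) (ha : a.IsSymm)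
    {x y : ι → ℝ} (hx : b ⬝ᵥ x = 0) (hy : b ⬝ᵥ y = 0) (hxy : x ⬝ᵥ a *ᵥ y ≠ 0) (μ : ι) :
    m * ρ μ = c₁ / 2 * b μ := by
  have hpol := h.polarized ha x y μ
  rw [hx, hy] at hpol
  apply mul_right_cancel₀ hxy
  linear_combination -hpol / 2

theorem c₂_eq_zero (h : MetrizabilityCondition a b ρ c₁ c₂ c₃ m q) (ha : a.IsSymm)
    (hb : b ≠ 0) {y : ι → ℝ} (hy : b ⬝ᵥ y = 0) (hay : a *ᵥ y ≠ 0)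
    (hm : ∀ μ, m * ρ μ = c₁ / 2 * b μ) : c₂ = 0 := by
  obtain ⟨μ, hμ⟩ := Function.ne_iff.mp hay
  have hbb : b ⬝ᵥ b ≠ 0 := dotProduct_self_eq_zero.not.mpr hb
  have hpol := h.polarized ha b y μ
  rw [hy] at hpol
  apply mul_right_cancel₀ (mul_ne_zero hbb hμ)
  linear_combination hpol + 2 * (b ⬝ᵥ a *ᵥ y) * hm μ

theorem q_mul_eq (h : MetrizabilityCondition a b ρ c₁ c₂ c₃ m q) (ha : a.IsSymm)
    (hb : b ≠ 0) (hc₂ : c₂ = 0) (hm : ∀ μ, m * ρ μ = c₁ / 2 * b μ) (μ : ι) :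
    q * ρ μ = c₃ / 2 * b μ := by
  have hbb : b ⬝ᵥ b ≠ 0 := dotProduct_self_eq_zero.not.mpr hb
  have hpol := h.polarized ha b b μ
  rw [hc₂] at hpol
  apply mul_right_cancel₀ (pow_ne_zero 2 hbb)
  linear_combination -hpol / 2 - (b ⬝ᵥ a *ᵥ b) * hm μ

end MetrizabilityCondition

end

/-- if `c₂ B ẋ_μ + ½(c₃B² + c₁A) b_μ = ρ_μ (mA + qB²)` for all ẋ, with `A`
nondegenerate (n ≥ 3) and `b ≠ 0`, then `c₂ = 0`, `q ρ = (c₃/2) b`, `m ρ = (c₁/2) b`,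
and `c₃ m = c₁ q`. -/
theorem first_metrizability_constraints (n : ℕ) (hn : 3 ≤ n)
    (a : Matrix (Fin n) (Fin n) ℝ) (hsym : ∀ i j, a i j = a j i) (hdet : a.det ≠ 0)
    (b ρ : Fin n → ℝ) (hb : b ≠ 0)
    (c₁ c₂ c₃ m q : ℝ)
    (h : ∀ x : Fin n → ℝ, ∀ μ : Fin n,
      c₂ * (∑ τ, b τ * x τ) * (∑ σ, a μ σ * x σ)
        + (1/2) * (c₃ * (∑ τ, b τ * x τ)^2 + c₁ * (∑ τ, ∑ σ, a τ σ * x τ * x σ)) * b μ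
      = ρ μ * (m * (∑ τ, ∑ σ, a τ σ * x τ * x σ) + q * (∑ τ, b τ * x τ)^2)) :
    c₂ = 0 ∧ (∀ μ, q * ρ μ = (c₃ / 2) * b μ) ∧ (∀ μ, m * ρ μ = (c₁ / 2) * b μ)
      ∧ c₃ * m = c₁ * q := by
  have ha : a.IsSymm := IsSymm.ext fun i j => hsym j i
  have hcond : MetrizabilityCondition a b ρ c₁ c₂ c₃ m q := fun x μ => by
    rw [← sum_sum_mul_mul_eq_dotProduct_mulVec]
    exact h x μ
  obtain ⟨x, y, hx, hy, hxy⟩ :=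
    exists_dotProduct_eq_zero_mulVec_ne_zero hdet (by rwa [Fintype.card_fin]) b
  have hm := hcond.m_mul_eq ha hx hy hxy
  have hc₂ := hcond.c₂_eq_zero ha hb hy (fun hay => hxy (by rw [hay, dotProduct_zero])) hm
  have hq := hcond.q_mul_eq ha hb hc₂ hm
  obtain ⟨k, hk⟩ := Function.ne_iff.mp hb
  refine ⟨hc₂, hq, hm, mul_right_cancel₀ hk ?_⟩
  linear_combination 2 * q * hm k - 2 * m * hq k
end

section
/- Let Φ(|b|,p) = (p/ε)·exp(c₃ε R(|b|))·F(e^{−c₃εR(|b|)}(ε−p)/(pε)) where R' (|b|) = |b|³/λ(|b|), ε = ±1, c₃ ≠ 0, F smooth, and set Ψ = ln Φ on a domain where Φ > 0. Then Ψ satisfies the PDE λ Ψ'_{|b|} + |b|³ p c₃ (p − ε) Ψ'_p − |b|³ p c₃ = 0. -/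
/-- The solution `Φ(|b|,p)` of the case `c₁ = c₂ = 0`, `c₃ ≠ 0`. -/
noncomputable def Phi17 (ε c₃ : ℝ) (R F : ℝ → ℝ) (t p : ℝ) : ℝ :=
  (p / ε) * Real.exp (c₃ * ε * R t)
    * F (Real.exp (-(c₃ * ε * R t)) * (ε - p) / (p * ε))

/-- `Ψ = ln Φ`. -/
noncomputable def Psi17 (ε c₃ : ℝ) (R F : ℝ → ℝ) (t p : ℝ) : ℝ :=
  Real.log (Phi17 ε c₃ R F t p)

/-- `Ψ = ln Φ` with `Φ` as above (where `R' = t³/λ`) satisfies the PDE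
`λ Ψ'_{|b|} + |b|³ p c₃ (p − ε) Ψ'_p − |b|³ p c₃ = 0`. -/
theorem psi_solves_pde (ε c₃ : ℝ) (hε : ε = 1 ∨ ε = -1) (hc₃ : c₃ ≠ 0)
    (R F lam : ℝ → ℝ) (hF : Differentiable ℝ F)
    (I : Set ℝ) (hI : IsOpen I) (hIpos : I ⊆ Set.Ioi 0)
    (hlam : ∀ t ∈ I, lam t ≠ 0)
    (hR : ∀ t ∈ I, HasDerivAt R (t ^ 3 / lam t) t) :
    ∀ t ∈ I, ∀ p : ℝ, 0 < p → 0 < Phi17 ε c₃ R F t p →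
      lam t * deriv (fun s => Psi17 ε c₃ R F s p) t
        + t ^ 3 * p * c₃ * (p - ε) * deriv (fun r => Psi17 ε c₃ R F t r) p
        - t ^ 3 * p * c₃ = 0 := by
  intro t ht p hp hΦ
  have hεne : ε ≠ 0 := by rcases hε with rfl | rfl <;> norm_num
  have hpne : p ≠ 0 := ne_of_gt hp
  have hlamne := hlam t ht
  have hΦne : Phi17 ε c₃ R F t p ≠ 0 := ne_of_gt hΦ
  have hΦne' : (p / ε) * Real.exp (c₃ * ε * R t)
      * F (Real.exp (-(c₃ * ε * R t)) * (ε - p) / (p * ε)) ≠ 0 := hΦne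
  set A := c₃ * ε * R t with hA
  set u := Real.exp (-A) * (ε - p) / (p * ε) with hu
  have hFune : F u ≠ 0 := by
    intro h
    rw [h, mul_zero] at hΦne'
    exact hΦne' rfl
  -- t-derivative
  have hRA : HasDerivAt (fun s => c₃ * ε * R s) (c₃ * ε * (t ^ 3 / lam t)) t :=
    (hR t ht).const_mul _
  have h1 : HasDerivAt (fun s => Real.exp (c₃ * ε * R s))
      (Real.exp A * (c₃ * ε * (t ^ 3 / lam t))) t := hRA.exp
  have h2 : HasDerivAt (fun s => Real.exp (-(c₃ * ε * R s)) * (ε - p) / (p * ε))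
      ((Real.exp (-A) * -(c₃ * ε * (t ^ 3 / lam t))) * (ε - p) / (p * ε)) t :=
    ((hRA.neg.exp).mul_const _).div_const _
  have h3 : HasDerivAt (fun s => F (Real.exp (-(c₃ * ε * R s)) * (ε - p) / (p * ε)))
      (deriv F u * ((Real.exp (-A) * -(c₃ * ε * (t ^ 3 / lam t))) * (ε - p) / (p * ε))) t :=
    (hF u).hasDerivAt.comp t h2
  have hPhit : HasDerivAt (fun s => Phi17 ε c₃ R F s p)
      ((p / ε) * (Real.exp A * (c₃ * ε * (t ^ 3 / lam t)))
          * F u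
        + (p / ε) * Real.exp A
          * (deriv F u * ((Real.exp (-A) * -(c₃ * ε * (t ^ 3 / lam t))) * (ε - p) / (p * ε)))) t := by
    unfold Phi17
    exact (h1.const_mul (p / ε)).mul h3
  have hΨt := (hPhit.log hΦne).deriv
  -- p-derivative
  have k1 : HasDerivAt (fun r : ℝ => Real.exp (-A) * (ε - r)) (Real.exp (-A) * (0 - 1)) p :=
    ((hasDerivAt_const p ε).sub (hasDerivAt_id p)).const_mul _
  have k2 : HasDerivAt (fun r : ℝ => r * ε) ε p := by
    simpa using (hasDerivAt_id p).mul_const ε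
  have k3 : HasDerivAt (fun r : ℝ => Real.exp (-A) * (ε - r) / (r * ε))
      ((Real.exp (-A) * (0 - 1) * (p * ε) - Real.exp (-A) * (ε - p) * ε) / (p * ε) ^ 2) p :=
    k1.div k2 (mul_ne_zero hpne hεne)
  have k4 : HasDerivAt (fun r : ℝ => F (Real.exp (-A) * (ε - r) / (r * ε)))
      (deriv F u * ((Real.exp (-A) * (0 - 1) * (p * ε) - Real.exp (-A) * (ε - p) * ε) / (p * ε) ^ 2)) p :=
    (hF u).hasDerivAt.comp p k3
  have k5 : HasDerivAt (fun r : ℝ => r / ε * Real.exp A) (1 / ε * Real.exp A) p :=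
    ((hasDerivAt_id p).div_const ε).mul_const _
  have hPhip : HasDerivAt (fun r => Phi17 ε c₃ R F t r)
      (1 / ε * Real.exp A * F u
        + p / ε * Real.exp A
          * (deriv F u * ((Real.exp (-A) * (0 - 1) * (p * ε) - Real.exp (-A) * (ε - p) * ε) / (p * ε) ^ 2))) p := by
    unfold Phi17
    exact k5.mul k4
  have hΨp := (hPhip.log hΦne).deriv
  have hgoal : deriv (fun s => Psi17 ε c₃ R F s p) t
      = deriv (fun s => Real.log (Phi17 ε c₃ R F s p)) t := rfl
  simp only [Psi17]
  rw [hΨt, hΨp]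
  rw [Real.exp_neg] at hu ⊢
  have hE : Real.exp A ≠ 0 := Real.exp_ne_zero A
  have hΦeq : Phi17 ε c₃ R F t p = p / ε * Real.exp A * F u := rfl
  rw [hΦeq]
  rcases hε with rfl | rfl <;>
    field_simp <;> ring
end
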